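/- Every fighting fish, viewed as a word over {E,N,W,S} interpreted as unit steps East, North, West, South starting at the origin, is an excursion in the quarter plane: the walk starts and ends at (0,0) and stays within {(x,y) : x ≥ 0, y ≥ 0}. -/
import Mathlib


/-- The alphabet of (extended) fighting fish: `E`, `N`, `W`, `S` encode the four
kinds of free edges (steps East, North, West, South), and `V` encodes a
triangle (a replaced `WN` factor). -/
inductive FLetter where
  | E : FLetter
  | N : FLetter
  | W : FLetter
  | S : FLetter
  | V : FLetter
deriving DecidableEq, Repr

open FLetter

/-- Fighting fish: words over `{E,N,W,S}` obtainable from `ENWS` by the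
rewriting rules `W → NWS` (upper gluing), `N → ENW` (lower gluing) and
`WN → NW` (double gluing). -/
inductive IsFish : List FLetter → Prop
  | base : IsFish [E, N, W, S]
  | upper (A B : List FLetter) : IsFish (A ++ [W] ++ B) → IsFish (A ++ [N, W, S] ++ B)
  | lower (A B : List FLetter) : IsFish (A ++ [N] ++ B) → IsFish (A ++ [E, N, W] ++ B)
  | double (A B : List FLetter) : IsFish (A ++ [W, N] ++ B) → IsFish (A ++ [N, W] ++ B)

/-- `VRepl f w` holds iff `w` is obtained from `f` by replacing some
occurrences of the factor `WN` by the letter `V`. -/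
inductive VRepl : List FLetter → List FLetter → Prop
  | refl (w : List FLetter) : VRepl w w
  | step (A B w : List FLetter) : VRepl w (A ++ [W, N] ++ B) → VRepl w (A ++ [V] ++ B)

/-- Extended fighting fish: words obtained from a fighting fish by replacing a
set of occurrences of the factor `WN` by the letter `V`. -/
def IsEFish (w : List FLetter) : Prop := ∃ f, IsFish f ∧ VRepl f w

/-- The unit step in `ℤ²` associated to each letter. -/
def stepVec : FLetter → ℤ × ℤ
  | E => (1, 0)
  | N => (0, 1)
  | W => (-1, 0)
  | S => (0, -1)
  | V => (-1, 1)

/-- Endpoint of the walk of a word starting at the origin. -/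
def walkEnd (w : List FLetter) : ℤ × ℤ := (w.map stepVec).sum

lemma walkEnd_append (a b : List FLetter) : walkEnd (a ++ b) = walkEnd a + walkEnd b := by
  simp [walkEnd]

lemma pref_split {p A B : List FLetter} (h : p <+: A ++ B) :
    p <+: A ∨ ∃ q, q <+: B ∧ p = A ++ q := by
  rcases le_or_gt p.length A.length with hl | hl
  · exact Or.inl (List.prefix_of_prefix_length_le h (A.prefix_append B) hl)
  · obtain ⟨q, rfl⟩ := List.prefix_of_prefix_length_le (A.prefix_append B) h hl.le
    obtain ⟨t, ht⟩ := h
    rw [List.append_assoc, List.append_right_inj] at ht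
    exact Or.inr ⟨q, ⟨t, ht⟩, rfl⟩

lemma pref_short3 {a b c : FLetter} {q : List FLetter} (h : q <+: [a, b, c]) :
    q = [] ∨ q = [a] ∨ q = [a, b] ∨ q = [a, b, c] := by
  obtain ⟨t, ht⟩ := h
  rcases q with _ | ⟨x, _ | ⟨y, _ | ⟨z, _ | ⟨u, q⟩⟩⟩⟩ <;> simp_all

lemma pref_short2 {a b : FLetter} {q : List FLetter} (h : q <+: [a, b]) :
    q = [] ∨ q = [a] ∨ q = [a, b] := by
  obtain ⟨t, ht⟩ := h
  rcases q with _ | ⟨x, _ | ⟨y, _ | ⟨z, q⟩⟩⟩ <;> simp_all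

lemma prefA (A M B : List FLetter) : A <+: A ++ M ++ B := by
  rw [List.append_assoc]; exact List.prefix_append _ _

lemma prefAM (A M B : List FLetter) : A ++ M <+: A ++ M ++ B := List.prefix_append _ _

lemma prefExt {q B : List FLetter} (C : List FLetter) (h : q <+: B) : C ++ q <+: C ++ B := by
  obtain ⟨t, rfl⟩ := h; exact ⟨t, by simp⟩


/-- Every fighting fish, viewed as a walk starting at the origin
with `E, N, W, S` interpreted as unit East/North/West/South steps, is an
excursion in the quarter plane: it ends at the origin and every prefix of the
walk stays in `{(x,y) : x ≥ 0, y ≥ 0}`. -/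
theorem fish_is_quarter_plane_excursion (w : List FLetter) (hw : IsFish w) :
    walkEnd w = (0, 0) ∧
    ∀ p : List FLetter, p <+: w → 0 ≤ (walkEnd p).1 ∧ 0 ≤ (walkEnd p).2 := by
  induction hw with
  | base =>
      refine ⟨by decide, fun p hp => ?_⟩
      rw [← List.mem_inits] at hp
      fin_cases hp <;> decide
  | upper A B h ih =>
      obtain ⟨ih1, ih2⟩ := ih
      have hx : walkEnd [N, W, S] = walkEnd [W] := by decide
      have hend : ∀ q, walkEnd (A ++ [N,W,S] ++ q) = walkEnd (A ++ [W] ++ q) := by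
        intro q; simp only [walkEnd_append, hx]
      refine ⟨by rw [hend]; exact ih1, fun p hp => ?_⟩
      obtain ⟨hA1, hA2⟩ := ih2 A (prefA A [W] B)
      obtain ⟨hM1, hM2⟩ := ih2 (A ++ [W]) (prefAM A [W] B)
      rcases pref_split hp with hp | ⟨q, hq, rfl⟩
      · rcases pref_split hp with hp | ⟨q, hq, rfl⟩
        · exact ih2 p (hp.trans (prefA A [W] B))
        · rcases pref_short3 hq with rfl | rfl | rfl | rfl <;>
            constructor <;>
            simp [walkEnd_append, walkEnd, stepVec, Prod.fst_add,
              Prod.snd_add] at * <;> omega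
      · rw [hend]
        exact ih2 _ ((prefExt (A ++ [W]) hq).trans (by simp))
  | lower A B h ih =>
      obtain ⟨ih1, ih2⟩ := ih
      have hx : walkEnd [E, N, W] = walkEnd [N] := by decide
      have hend : ∀ q, walkEnd (A ++ [E,N,W] ++ q) = walkEnd (A ++ [N] ++ q) := by
        intro q; simp only [walkEnd_append, hx]
      refine ⟨by rw [hend]; exact ih1, fun p hp => ?_⟩
      obtain ⟨hA1, hA2⟩ := ih2 A (prefA A [N] B)
      obtain ⟨hM1, hM2⟩ := ih2 (A ++ [N]) (prefAM A [N] B)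
      rcases pref_split hp with hp | ⟨q, hq, rfl⟩
      · rcases pref_split hp with hp | ⟨q, hq, rfl⟩
        · exact ih2 p (hp.trans (prefA A [N] B))
        · rcases pref_short3 hq with rfl | rfl | rfl | rfl <;>
            constructor <;>
            simp [walkEnd_append, walkEnd, stepVec, Prod.fst_add,
              Prod.snd_add] at * <;> omega
      · rw [hend]
        exact ih2 _ ((prefExt (A ++ [N]) hq).trans (by simp))
  | double A B h ih =>
      obtain ⟨ih1, ih2⟩ := ih
      have hx : walkEnd [N, W] = walkEnd [W, N] := by decide
      have hend : ∀ q, walkEnd (A ++ [N,W] ++ q) = walkEnd (A ++ [W,N] ++ q) := by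
        intro q; simp only [walkEnd_append, hx]
      refine ⟨by rw [hend]; exact ih1, fun p hp => ?_⟩
      obtain ⟨hA1, hA2⟩ := ih2 A (prefA A [W,N] B)
      obtain ⟨hM1, hM2⟩ := ih2 (A ++ [W,N]) (prefAM A [W,N] B)
      rcases pref_split hp with hp | ⟨q, hq, rfl⟩
      · rcases pref_split hp with hp | ⟨q, hq, rfl⟩
        · exact ih2 p (hp.trans (prefA A [W,N] B))
        · rcases pref_short2 hq with rfl | rfl | rfl <;>
            constructor <;>
            simp [walkEnd_append, walkEnd, stepVec, Prod.fst_add,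
              Prod.snd_add] at * <;> omega
      · rw [hend]
        exact ih2 _ ((prefExt (A ++ [W,N]) hq).trans (by simp))
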